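/- Let A = (E, ≤, ↗, λ) be an asymmetric event structure, X ⊆ E a combinable set of events and A/X its folding. Then the folding morphism f : E → E/X is an AES-morphism from A to A/X. -/

import Mathlib

/-- Restriction of a binary relation to a set. -/
def RelRestrict {G : Type*} (r : G → G → Prop) (S : Set G) : G → G → Prop :=
  fun a b => a ∈ S ∧ b ∈ S ∧ r a b

/-- A binary relation is acyclic on a set: there is no cycle lying within the set. -/
def AcyclicOn {G : Type*} (r : G → G → Prop) (S : Set G) : Prop :=
  ∀ x, ¬ Relation.TransGen (RelRestrict r S) x x

/-- The data of a labelled asymmetric event structure (AES). -/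
structure AES (E : Type*) (Λ : Type*) where
  le : E → E → Prop
  ac : E → E → Prop
  lab : E → Λ

namespace AES

variable {E : Type*} {Λ : Type*}

/-- Strict causality. -/
def lt (A : AES E Λ) (e e' : E) : Prop := A.le e e' ∧ e ≠ e'

/-- The set of causes `⌊e⌋`. -/
def causes (A : AES E Λ) (e : E) : Set E := {e' | A.le e' e}

/-- `⌊Y⌋`, the causes of a set of events. -/
def causesSet (A : AES E Λ) (Y : Set E) : Set E := ⋃ y ∈ Y, A.causes y

/-- The axioms making the data an asymmetric event structure. -/
structure IsAES (A : AES E Λ) : Prop where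
  le_refl : ∀ e, A.le e e
  le_trans : ∀ e e' e'', A.le e e' → A.le e' e'' → A.le e e''
  le_antisymm : ∀ e e', A.le e e' → A.le e' e → e = e'
  causes_finite : ∀ e, (A.causes e).Finite
  lt_ac : ∀ e e', A.lt e e' → A.ac e e'
  ac_heredity : ∀ e e' e'', A.ac e e' → A.lt e' e'' → A.ac e e''
  ac_acyclic : ∀ e, AcyclicOn A.ac (A.causes e)
  cyclic_ac : ∀ e e', ¬ AcyclicOn A.ac (A.causes e ∪ A.causes e') → A.ac e e'

/-- Conflict on sets of events, inductively generated from cycles of asymmetric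
conflict and closed under hereditarity along causality. -/
inductive SetConflict (A : AES E Λ) : Set E → Prop
  | cycle (e : E) (l : List E) : List.Chain A.ac e (l ++ [e]) →
      SetConflict A {x | x ∈ e :: l}
  | heredity (Y : Set E) (e e' : E) :
      SetConflict A (Y ∪ {e}) → A.le e e' → SetConflict A (Y ∪ {e'})

/-- Binary conflict `e # e'`. -/
def Conflict (A : AES E Λ) (e e' : E) : Prop := A.SetConflict {e, e'}

/-- A set of events is consistent if it contains no two events in conflict. -/
def ConsistentSet (A : AES E Λ) (Y : Set E) : Prop :=
  ∀ e ∈ Y, ∀ e' ∈ Y, ¬ A.Conflict e e'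

/-- Immediate causality `e' <_μ e`. -/
def ltMu (A : AES E Λ) (e' e : E) : Prop :=
  A.lt e' e ∧ ¬ ∃ e'', A.lt e' e'' ∧ A.lt e'' e

/-- Direct asymmetric conflict `e ↗_μ e''`. -/
def acMu (A : AES E Λ) (e e'' : E) : Prop :=
  A.ac e e'' ∧ ¬ ∃ e', A.ac e e' ∧ A.lt e' e''

/-- Direct binary conflict `e #_μ e'`. -/
def confMu (A : AES E Λ) (e e' : E) : Prop := A.acMu e e' ∧ A.acMu e' e

/-- Configurations: finite, causally closed and free of asymmetric-conflict cycles. -/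
def Config (A : AES E Λ) (C : Set E) : Prop :=
  C.Finite ∧ (∀ e ∈ C, A.causes e ⊆ C) ∧ AcyclicOn A.ac C

/-- Similar sets of events. -/
def Similar (A : AES E Λ) (X : Set E) : Prop :=
  ∀ e ∈ X, ∀ e' ∈ X,
    A.lab e = A.lab e' ∧ (e ≠ e' → A.Conflict e e') ∧
    ∀ e'', e'' ∉ X →
      (A.ac e e'' → (A.ac e' e'' ∨ A.ac e'' e)) ∧
      (A.acMu e'' e → A.ac e'' e')

/-- The strict causes `S(X)`. -/
def strictCauses (A : AES E Λ) (X : Set E) : Set E := {e' | ∀ e ∈ X, A.lt e' e}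

/-- The weak predecessors `W(X)`. -/
def weakPred (A : AES E Λ) (X : Set E) : Set E :=
  {e'' | ∃ e ∈ X, ∃ e' ∈ X, A.ac e'' e ∧ ¬ A.ac e' e''} \ (A.strictCauses X ∪ X)

/-- The history `C⟦e⟧` of `e` in a configuration `C`. -/
def history (A : AES E Λ) (C : Set E) (e : E) : Set E :=
  {e' | e' ∈ C ∧ Relation.ReflTransGen (RelRestrict A.ac C) e' e}

/-- The set of possible histories of `e`. -/
def Hist (A : AES E Λ) (e : E) : Set (Set E) :=
  {h | ∃ C, A.Config C ∧ e ∈ C ∧ h = A.history C e}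

/-- Combinable sets of events. -/
def Combinable (A : AES E Λ) (X : Set E) : Prop :=
  A.Similar X ∧
  ∀ Y, Y ⊆ A.weakPred X → A.ConsistentSet Y →
    ∃ e ∈ X, (∀ e' ∈ Y, ¬ A.ac e e') ∧
      ∃ h ∈ A.Hist e, h \ {e} ⊆ A.strictCauses X ∪ A.causesSet Y

/-- The carrier of the folded structure: `(E \ X) ∪ {e_X}`, where the fresh
event `e_X` is encoded as `none`. -/
def foldCarrier (X : Set E) : Set (Option E) :=
  {x | x = none ∨ ∃ e, e ∉ X ∧ x = some e}

/-- Causality of the folded structure. -/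
def foldLe (A : AES E Λ) (X : Set E) : Option E → Option E → Prop
  | some e, some e' => e ∉ X ∧ e' ∉ X ∧ A.le e e'
  | some e, none => e ∈ A.strictCauses X
  | none, some e => e ∉ X ∧ ∃ e' ∈ X, A.lt e' e
  | none, none => True

/-- Asymmetric conflict of the folded structure. -/
def foldAc (A : AES E Λ) (X : Set E) : Option E → Option E → Prop
  | some e, some e' => e ∉ X ∧ e' ∉ X ∧ A.ac e e'
  | some e', none => e' ∉ X ∧ ∀ e ∈ X, A.ac e' e
  | none, some e' => e' ∉ X ∧ ∀ e ∈ X, A.ac e e'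
  | none, none => False

open Classical in
/-- Labelling of the folded structure. -/
noncomputable def foldLab [Inhabited Λ] (A : AES E Λ) (X : Set E) : Option E → Λ
  | some e => A.lab e
  | none => if h : X.Nonempty then A.lab h.some else default

open Classical in
/-- The folding morphism `f : E → E/X`. -/
noncomputable def foldMap (X : Set E) : E → Option E :=
  fun e => if e ∈ X then none else some e

end AES


namespace AES

variable {E Λ : Type*} {X : Set E}

@[simp]
theorem foldMap_of_mem {e : E} (he : e ∈ X) : foldMap X e = none := by
  simp [foldMap, he]

@[simp]
theorem foldMap_of_notMem {e : E} (he : e ∉ X) : foldMap X e = some e := by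
  simp [foldMap, he]

theorem foldMap_injOn_compl : Set.InjOn (foldMap X) Xᶜ := fun e he e' he' h => by
  simpa [foldMap_of_notMem he, foldMap_of_notMem he'] using h

theorem foldLe_foldMap_subset_image_causes (A : AES E Λ) (hrefl : ∀ e, A.le e e) (e : E) :
    {x | x ∈ foldCarrier X ∧ A.foldLe X x (foldMap X e)} ⊆ foldMap X '' A.causes e := by
  rintro x ⟨rfl | ⟨c, hcX, rfl⟩, hle⟩ <;> by_cases he : e ∈ X <;>
    simp only [foldMap_of_mem, foldMap_of_notMem, foldLe, he, not_false_eq_true] at hle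
  · exact ⟨e, hrefl e, by simp [he]⟩
  · obtain ⟨-, c, hcX, hce⟩ := hle
    exact ⟨c, hce.1, by simp [hcX]⟩
  · exact ⟨c, (hle e he).1, foldMap_of_notMem hcX⟩
  · exact ⟨c, hle.2.2, foldMap_of_notMem hcX⟩

theorem ac_of_foldAc_foldMap (A : AES E Λ) {e e' : E}
    (h : A.foldAc X (foldMap X e) (foldMap X e')) : A.ac e e' := by
  by_cases he : e ∈ X <;> by_cases he' : e' ∈ X <;>
    simp only [foldMap_of_mem, foldMap_of_notMem, foldAc, he, he',
      not_false_eq_true] at h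
  · exact h.2 e he
  · exact h.2 e' he'
  · exact h.2.2

theorem Similar.conflict_of_foldMap_eq {A : AES E Λ} (hX : A.Similar X) {e e' : E}
    (h : foldMap X e = foldMap X e') (hne : e ≠ e') : A.Conflict e e' := by
  by_cases he : e ∈ X <;> by_cases he' : e' ∈ X
  · exact (hX e he e' he').2.1 hne
  · simp [he, he'] at h
  · simp [he, he'] at h
  · exact absurd (foldMap_injOn_compl he he' h) hne

end AES

open AES in
/-- the folding morphism is an AES-morphism from `A` to `A/X`:
(1) `⌊f(e)⌋ ⊆ f(⌊e⌋)`, (2) it reflects asymmetric conflict, and (3) events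
identified by it are in conflict. -/
theorem aes_foldMap_is_AES_morphism
    {E Λ : Type*} (A : AES E Λ) (hA : A.IsAES) (X : Set E) (hX : A.Combinable X) :
    (∀ e : E, {x | x ∈ foldCarrier X ∧ A.foldLe X x (foldMap X e)} ⊆
        foldMap X '' (A.causes e)) ∧
    (∀ e e' : E, A.foldAc X (foldMap X e) (foldMap X e') → A.ac e e') ∧
    (∀ e e' : E, foldMap X e = foldMap X e' → e ≠ e' → A.Conflict e e') :=
  ⟨A.foldLe_foldMap_subset_image_causes hA.le_refl, fun _ _ => A.ac_of_foldAc_foldMap,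
    fun _ _ => hX.1.conflict_of_foldMap_eq⟩
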